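/- arXiv:1509.01490 — 3 statements merged into one kernel-verified Lean document; each statement's English description precedes it below -/
import Mathlib

section
/- Let Δ(λ) be the discriminant of x^5 + λ₄x³ + λ₆x² + λ₈x + λ₁₀ and let ℓ₂ = 6λ₆∂_{λ₄} + (8λ₈ - (12/5)λ₄²)∂_{λ₆} + (10λ₁₀ - (8/5)λ₆λ₄)∂_{λ₈} - (4/5)λ₈λ₄∂_{λ₁₀}. Then ℓ₂Δ = 0, i.e. ℓ₂ annihilates the discriminant. -/
/-- The discriminant of the quintic `x^5 + l4*x^3 + l6*x^2 + l8*x + l10`. -/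
noncomputable def quinticDisc (l4 l6 l8 l10 : ℂ) : ℂ :=
  3125 * l10 ^ 4 - 3750 * l10 ^ 3 * l6 * l4 + 2000 * l10 ^ 2 * l8 ^ 2 * l4
    + 2250 * l10 ^ 2 * l8 * l6 ^ 2 - 1600 * l10 * l8 ^ 3 * l6 + 256 * l8 ^ 5
    - 900 * l10 ^ 2 * l8 * l4 ^ 3 + 825 * l10 ^ 2 * l6 ^ 2 * l4 ^ 2
    + 560 * l10 * l8 ^ 2 * l6 * l4 ^ 2 - 630 * l10 * l8 * l6 ^ 3 * l4
    + 108 * l10 * l6 ^ 5 - 128 * l8 ^ 4 * l4 ^ 2 + 144 * l8 ^ 3 * l6 ^ 2 * l4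
    - 27 * l8 ^ 2 * l6 ^ 4 + 108 * l10 ^ 2 * l4 ^ 5 - 72 * l10 * l8 * l6 * l4 ^ 4
    + 16 * l10 * l6 ^ 3 * l4 ^ 3 + 16 * l8 ^ 3 * l4 ^ 4 - 4 * l8 ^ 2 * l6 ^ 2 * l4 ^ 3

section PartialDerivatives

variable (l4 l6 l8 l10 : ℂ)

theorem deriv_quinticDisc_l4 :
    deriv (fun t => quinticDisc t l6 l8 l10) l4 =
      -3750 * l6 * l10 ^ 3 + 2000 * l8 ^ 2 * l10 ^ 2 - 2700 * l4 ^ 2 * l8 * l10 ^ 2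
        + 1650 * l4 * l6 ^ 2 * l10 ^ 2 + 1120 * l4 * l6 * l8 ^ 2 * l10 - 630 * l6 ^ 3 * l8 * l10
        - 256 * l4 * l8 ^ 4 + 144 * l6 ^ 2 * l8 ^ 3 + 540 * l4 ^ 4 * l10 ^ 2
        - 288 * l4 ^ 3 * l6 * l8 * l10 + 48 * l4 ^ 2 * l6 ^ 3 * l10 + 64 * l4 ^ 3 * l8 ^ 3
        - 12 * l4 ^ 2 * l6 ^ 2 * l8 ^ 2 := by
  simp (disch := fun_prop) only [quinticDisc, deriv_fun_add, deriv_fun_sub, deriv_fun_mul,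
    deriv_pow_field, deriv_const', deriv_const_mul_id]
  ring

theorem deriv_quinticDisc_l6 :
    deriv (fun t => quinticDisc l4 t l8 l10) l6 =
      -3750 * l4 * l10 ^ 3 + 4500 * l6 * l8 * l10 ^ 2 - 1600 * l8 ^ 3 * l10
        + 1650 * l4 ^ 2 * l6 * l10 ^ 2 + 560 * l4 ^ 2 * l8 ^ 2 * l10
        - 1890 * l4 * l6 ^ 2 * l8 * l10 + 540 * l6 ^ 4 * l10 + 288 * l4 * l6 * l8 ^ 3
        - 108 * l6 ^ 3 * l8 ^ 2 - 72 * l4 ^ 4 * l8 * l10 + 48 * l4 ^ 3 * l6 ^ 2 * l10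
        - 8 * l4 ^ 3 * l6 * l8 ^ 2 := by
  simp (disch := fun_prop) only [quinticDisc, deriv_fun_add, deriv_fun_sub, deriv_fun_mul,
    deriv_pow_field, deriv_const', deriv_const_mul_id]
  ring

theorem deriv_quinticDisc_l8 :
    deriv (fun t => quinticDisc l4 l6 t l10) l8 =
      4000 * l4 * l8 * l10 ^ 2 + 2250 * l6 ^ 2 * l10 ^ 2 - 4800 * l6 * l8 ^ 2 * l10
        + 1280 * l8 ^ 4 - 900 * l4 ^ 3 * l10 ^ 2 + 1120 * l4 ^ 2 * l6 * l8 * l10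
        - 630 * l4 * l6 ^ 3 * l10 - 512 * l4 ^ 2 * l8 ^ 3 + 432 * l4 * l6 ^ 2 * l8 ^ 2
        - 54 * l6 ^ 4 * l8 - 72 * l4 ^ 4 * l6 * l10 + 48 * l4 ^ 4 * l8 ^ 2
        - 8 * l4 ^ 3 * l6 ^ 2 * l8 := by
  simp (disch := fun_prop) only [quinticDisc, deriv_fun_add, deriv_fun_sub, deriv_fun_mul,
    deriv_pow_field, deriv_const', deriv_const_mul_id]
  ring

theorem deriv_quinticDisc_l10 :
    deriv (fun t => quinticDisc l4 l6 l8 t) l10 =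
      12500 * l10 ^ 3 - 11250 * l4 * l6 * l10 ^ 2 + 4000 * l4 * l8 ^ 2 * l10
        + 4500 * l6 ^ 2 * l8 * l10 - 1600 * l6 * l8 ^ 3 - 1800 * l4 ^ 3 * l8 * l10
        + 1650 * l4 ^ 2 * l6 ^ 2 * l10 + 560 * l4 ^ 2 * l6 * l8 ^ 2 - 630 * l4 * l6 ^ 3 * l8
        + 108 * l6 ^ 5 + 216 * l4 ^ 5 * l10 - 72 * l4 ^ 4 * l6 * l8 + 16 * l4 ^ 3 * l6 ^ 3 := by
  simp (disch := fun_prop) only [quinticDisc, deriv_fun_add, deriv_fun_sub, deriv_fun_mul,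
    deriv_pow_field, deriv_const', deriv_const_mul_id]
  ring

end PartialDerivatives

/-- the Zakalyukin vector field
ℓ₂ = 6λ₆∂_{λ₄} + (8λ₈ - (12/5)λ₄²)∂_{λ₆} + (10λ₁₀ - (8/5)λ₆λ₄)∂_{λ₈} - (4/5)λ₈λ₄∂_{λ₁₀}
annihilates the discriminant: ℓ₂Δ = 0. -/
theorem ell2_annihilates_disc (l4 l6 l8 l10 : ℂ) :
    6 * l6 * deriv (fun t => quinticDisc t l6 l8 l10) l4
      + (8 * l8 - 12 / 5 * l4 ^ 2) * deriv (fun t => quinticDisc l4 t l8 l10) l6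
      + (10 * l10 - 8 / 5 * l6 * l4) * deriv (fun t => quinticDisc l4 l6 t l10) l8
      - 4 / 5 * l8 * l4 * deriv (fun t => quinticDisc l4 l6 l8 t) l10
    = 0 := by
  rw [deriv_quinticDisc_l4, deriv_quinticDisc_l6, deriv_quinticDisc_l8, deriv_quinticDisc_l10]
  ring
end

section
/- Let Δ(λ) be the discriminant of x^5 + λ₄x³ + λ₆x² + λ₈x + λ₁₀ and let ℓ₄ = 8λ₈∂_{λ₄} + (10λ₁₀ - (8/5)λ₆λ₄)∂_{λ₆} + (4λ₈λ₄ - (12/5)λ₆²)∂_{λ₈} + (6λ₁₀λ₄ - (6/5)λ₈λ₆)∂_{λ₁₀}. Then ℓ₄Δ = 12λ₄·Δ. -/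
lemma deriv_poly5 (a b c d e f x : ℂ) :
    deriv (fun t => a + b * t + c * t ^ 2 + d * t ^ 3 + e * t ^ 4 + f * t ^ 5) x
      = b + 2 * c * x + 3 * d * x ^ 2 + 4 * e * x ^ 3 + 5 * f * x ^ 4 := by
  have h : HasDerivAt (fun t : ℂ => a + b * t + c * t ^ 2 + d * t ^ 3 + e * t ^ 4 + f * t ^ 5)
      (0 + b * 1 + c * (2 * x ^ 1) + d * (3 * x ^ 2) + e * (4 * x ^ 3) + f * (5 * x ^ 4)) x := by
    exact (((((hasDerivAt_const x a).add ((hasDerivAt_id x).const_mul b)).add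
      ((hasDerivAt_pow 2 x).const_mul c)).add ((hasDerivAt_pow 3 x).const_mul d)).add
      ((hasDerivAt_pow 4 x).const_mul e)).add ((hasDerivAt_pow 5 x).const_mul f)
  rw [h.deriv]; ring

/-- the Zakalyukin vector field
ℓ₄ = 8λ₈∂_{λ₄} + (10λ₁₀ - (8/5)λ₆λ₄)∂_{λ₆} + (4λ₈λ₄ - (12/5)λ₆²)∂_{λ₈}
  + (6λ₁₀λ₄ - (6/5)λ₈λ₆)∂_{λ₁₀} satisfies ℓ₄Δ = 12λ₄·Δ. -/
theorem ell4_on_disc (l4 l6 l8 l10 : ℂ) :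
    8 * l8 * deriv (fun t => quinticDisc t l6 l8 l10) l4
      + (10 * l10 - 8 / 5 * l6 * l4) * deriv (fun t => quinticDisc l4 t l8 l10) l6
      + (4 * l8 * l4 - 12 / 5 * l6 ^ 2) * deriv (fun t => quinticDisc l4 l6 t l10) l8
      + (6 * l10 * l4 - 6 / 5 * l8 * l6) * deriv (fun t => quinticDisc l4 l6 l8 t) l10
    = 12 * l4 * quinticDisc l4 l6 l8 l10 := by
  have h0 : deriv (fun t => quinticDisc t l6 l8 l10) l4
      = ((2000) * l8 ^ 2 * l10 ^ 2 + (-3750) * l6 * l10 ^ 3 + (144) * l6 ^ 2 * l8 ^ 3 + (-630) * l6 ^ 3 * l8 * l10) + 2 * ((-128) * l8 ^ 4 + (560) * l6 * l8 ^ 2 * l10 + (825) * l6 ^ 2 * l10 ^ 2) * l4 + 3 * ((-900) * l8 * l10 ^ 2 + (-4) * l6 ^ 2 * l8 ^ 2 + (16) * l6 ^ 3 * l10) * l4 ^ 2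
        + 4 * ((16) * l8 ^ 3 + (-72) * l6 * l8 * l10) * l4 ^ 3 + 5 * ((108) * l10 ^ 2) * l4 ^ 4 := by
    rw [show (fun t => quinticDisc t l6 l8 l10)
        = fun t => ((3125) * l10 ^ 4 + (256) * l8 ^ 5 + (-1600) * l6 * l8 ^ 3 * l10 + (2250) * l6 ^ 2 * l8 * l10 ^ 2 + (-27) * l6 ^ 4 * l8 ^ 2 + (108) * l6 ^ 5 * l10) + ((2000) * l8 ^ 2 * l10 ^ 2 + (-3750) * l6 * l10 ^ 3 + (144) * l6 ^ 2 * l8 ^ 3 + (-630) * l6 ^ 3 * l8 * l10) * t + ((-128) * l8 ^ 4 + (560) * l6 * l8 ^ 2 * l10 + (825) * l6 ^ 2 * l10 ^ 2) * t ^ 2 + ((-900) * l8 * l10 ^ 2 + (-4) * l6 ^ 2 * l8 ^ 2 + (16) * l6 ^ 3 * l10) * t ^ 3 + ((16) * l8 ^ 3 + (-72) * l6 * l8 * l10) * t ^ 4 + ((108) * l10 ^ 2) * t ^ 5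
      from funext fun t => by unfold quinticDisc; ring]
    exact deriv_poly5 ..
  have h1 : deriv (fun t => quinticDisc l4 t l8 l10) l6
      = ((-1600) * l8 ^ 3 * l10 + (-3750) * l4 * l10 ^ 3 + (560) * l4 ^ 2 * l8 ^ 2 * l10 + (-72) * l4 ^ 4 * l8 * l10) + 2 * ((2250) * l8 * l10 ^ 2 + (144) * l4 * l8 ^ 3 + (825) * l4 ^ 2 * l10 ^ 2 + (-4) * l4 ^ 3 * l8 ^ 2) * l6 + 3 * ((-630) * l4 * l8 * l10 + (16) * l4 ^ 3 * l10) * l6 ^ 2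
        + 4 * ((-27) * l8 ^ 2) * l6 ^ 3 + 5 * ((108) * l10) * l6 ^ 4 := by
    rw [show (fun t => quinticDisc l4 t l8 l10)
        = fun t => ((3125) * l10 ^ 4 + (256) * l8 ^ 5 + (2000) * l4 * l8 ^ 2 * l10 ^ 2 + (-128) * l4 ^ 2 * l8 ^ 4 + (-900) * l4 ^ 3 * l8 * l10 ^ 2 + (16) * l4 ^ 4 * l8 ^ 3 + (108) * l4 ^ 5 * l10 ^ 2) + ((-1600) * l8 ^ 3 * l10 + (-3750) * l4 * l10 ^ 3 + (560) * l4 ^ 2 * l8 ^ 2 * l10 + (-72) * l4 ^ 4 * l8 * l10) * t + ((2250) * l8 * l10 ^ 2 + (144) * l4 * l8 ^ 3 + (825) * l4 ^ 2 * l10 ^ 2 + (-4) * l4 ^ 3 * l8 ^ 2) * t ^ 2 + ((-630) * l4 * l8 * l10 + (16) * l4 ^ 3 * l10) * t ^ 3 + ((-27) * l8 ^ 2) * t ^ 4 + ((108) * l10) * t ^ 5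
      from funext fun t => by unfold quinticDisc; ring]
    exact deriv_poly5 ..
  have h2 : deriv (fun t => quinticDisc l4 l6 t l10) l8
      = ((2250) * l6 ^ 2 * l10 ^ 2 + (-630) * l4 * l6 ^ 3 * l10 + (-900) * l4 ^ 3 * l10 ^ 2 + (-72) * l4 ^ 4 * l6 * l10) + 2 * ((-27) * l6 ^ 4 + (2000) * l4 * l10 ^ 2 + (560) * l4 ^ 2 * l6 * l10 + (-4) * l4 ^ 3 * l6 ^ 2) * l8 + 3 * ((-1600) * l6 * l10 + (144) * l4 * l6 ^ 2 + (16) * l4 ^ 4) * l8 ^ 2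
        + 4 * ((-128) * l4 ^ 2) * l8 ^ 3 + 5 * ((256)) * l8 ^ 4 := by
    rw [show (fun t => quinticDisc l4 l6 t l10)
        = fun t => ((3125) * l10 ^ 4 + (108) * l6 ^ 5 * l10 + (-3750) * l4 * l6 * l10 ^ 3 + (825) * l4 ^ 2 * l6 ^ 2 * l10 ^ 2 + (16) * l4 ^ 3 * l6 ^ 3 * l10 + (108) * l4 ^ 5 * l10 ^ 2) + ((2250) * l6 ^ 2 * l10 ^ 2 + (-630) * l4 * l6 ^ 3 * l10 + (-900) * l4 ^ 3 * l10 ^ 2 + (-72) * l4 ^ 4 * l6 * l10) * t + ((-27) * l6 ^ 4 + (2000) * l4 * l10 ^ 2 + (560) * l4 ^ 2 * l6 * l10 + (-4) * l4 ^ 3 * l6 ^ 2) * t ^ 2 + ((-1600) * l6 * l10 + (144) * l4 * l6 ^ 2 + (16) * l4 ^ 4) * t ^ 3 + ((-128) * l4 ^ 2) * t ^ 4 + ((256)) * t ^ 5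
      from funext fun t => by unfold quinticDisc; ring]
    exact deriv_poly5 ..
  have h3 : deriv (fun t => quinticDisc l4 l6 l8 t) l10
      = ((-1600) * l6 * l8 ^ 3 + (108) * l6 ^ 5 + (-630) * l4 * l6 ^ 3 * l8 + (560) * l4 ^ 2 * l6 * l8 ^ 2 + (16) * l4 ^ 3 * l6 ^ 3 + (-72) * l4 ^ 4 * l6 * l8) + 2 * ((2250) * l6 ^ 2 * l8 + (2000) * l4 * l8 ^ 2 + (825) * l4 ^ 2 * l6 ^ 2 + (-900) * l4 ^ 3 * l8 + (108) * l4 ^ 5) * l10 + 3 * ((-3750) * l4 * l6) * l10 ^ 2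
        + 4 * ((3125)) * l10 ^ 3 + 5 * (0:ℂ) * l10 ^ 4 := by
    rw [show (fun t => quinticDisc l4 l6 l8 t)
        = fun t => ((256) * l8 ^ 5 + (-27) * l6 ^ 4 * l8 ^ 2 + (144) * l4 * l6 ^ 2 * l8 ^ 3 + (-128) * l4 ^ 2 * l8 ^ 4 + (-4) * l4 ^ 3 * l6 ^ 2 * l8 ^ 2 + (16) * l4 ^ 4 * l8 ^ 3) + ((-1600) * l6 * l8 ^ 3 + (108) * l6 ^ 5 + (-630) * l4 * l6 ^ 3 * l8 + (560) * l4 ^ 2 * l6 * l8 ^ 2 + (16) * l4 ^ 3 * l6 ^ 3 + (-72) * l4 ^ 4 * l6 * l8) * t + ((2250) * l6 ^ 2 * l8 + (2000) * l4 * l8 ^ 2 + (825) * l4 ^ 2 * l6 ^ 2 + (-900) * l4 ^ 3 * l8 + (108) * l4 ^ 5) * t ^ 2 + ((-3750) * l4 * l6) * t ^ 3 + ((3125)) * t ^ 4 + (0:ℂ) * t ^ 5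
      from funext fun t => by unfold quinticDisc; ring]
    exact deriv_poly5 ..
  rw [h0, h1, h2, h3]; unfold quinticDisc; ring
end

section
/- In the rational (cuspidal) limit where σ(ξ) = ξ, ζ(ξ) = 1/ξ, ℘(ξ) = 1/ξ², ℘'(ξ) = -2/ξ³, the system ξ₁ + ξ₂ = U₁ and (α-ξ₁)(α-ξ₂)/((α+ξ₁)(α+ξ₂)) = e^{-2U₁/α - 2U₃/α³} is solved by ξ₁ + ξ₂ = U₁ and ξ₁ξ₂ = -α² + αU₁·coth(U₃/α³ + U₁/α). That is: if ξ₁ + ξ₂ = U₁ and ξ₁ξ₂ = -α² + αU₁·cosh(w)/sinh(w) with w = U₃/α³ + U₁/α, sinh(w) ≠ 0, then (α-ξ₁)(α-ξ₂)/((α+ξ₁)(α+ξ₂)) = e^{-2w}. -/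
open Complex

/-!
With `w = U₃/α³ + U₁/α`, Vieta gives
`(α ± ξ₁)(α ± ξ₂) = α² ± αU₁ + ξ₁ξ₂ = αU₁ (coth w ± 1)`, and `coth w ± 1 = e^{±w} / sinh w`.
The common factor `αU₁ / sinh w` cancels in the quotient, leaving `e^{-w} / e^{w} = e^{-2w}`.
-/

lemma add_mul_add_eq_of_sum_of_prod {R : Type*} [CommRing R] {α U t ξ₁ ξ₂ : R}
    (hsum : ξ₁ + ξ₂ = U) (hprod : ξ₁ * ξ₂ = -α ^ 2 + α * U * t) :
    (α + ξ₁) * (α + ξ₂) = α * U * (t + 1) := by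
  linear_combination α * hsum + hprod

lemma sub_mul_sub_eq_of_sum_of_prod {R : Type*} [CommRing R] {α U t ξ₁ ξ₂ : R}
    (hsum : ξ₁ + ξ₂ = U) (hprod : ξ₁ * ξ₂ = -α ^ 2 + α * U * t) :
    (α - ξ₁) * (α - ξ₂) = α * U * (t - 1) := by
  linear_combination -α * hsum + hprod

namespace Complex

lemma cosh_div_sinh_add_one {w : ℂ} (hw : sinh w ≠ 0) :
    cosh w / sinh w + 1 = exp w / sinh w := by
  rw [div_add_one hw, cosh_add_sinh]

lemma cosh_div_sinh_sub_one {w : ℂ} (hw : sinh w ≠ 0) :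
    cosh w / sinh w - 1 = exp (-w) / sinh w := by
  rw [div_sub_one hw, cosh_sub_sinh]

lemma cosh_div_sinh_sub_one_div_add_one {w : ℂ} (hw : sinh w ≠ 0) :
    (cosh w / sinh w - 1) / (cosh w / sinh w + 1) = exp (-2 * w) := by
  rw [cosh_div_sinh_sub_one hw, cosh_div_sinh_add_one hw, div_div_div_cancel_right₀ hw,
    ← exp_sub]
  ring_nf

end Complex

theorem rational_limit_jacobi_inversion_general (α U₁ U₃ ξ₁ ξ₂ : ℂ)
    (hden : (α + ξ₁) * (α + ξ₂) ≠ 0)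
    (hw : Complex.sinh (U₃ / α ^ 3 + U₁ / α) ≠ 0)
    (hsum : ξ₁ + ξ₂ = U₁)
    (hprod : ξ₁ * ξ₂ = -α ^ 2 + α * U₁ *
      Complex.cosh (U₃ / α ^ 3 + U₁ / α) / Complex.sinh (U₃ / α ^ 3 + U₁ / α)) :
    (α - ξ₁) * (α - ξ₂) / ((α + ξ₁) * (α + ξ₂))
      = Complex.exp (-2 * (U₃ / α ^ 3 + U₁ / α)) := by
  rw [mul_div_assoc] at hprod
  rw [add_mul_add_eq_of_sum_of_prod hsum hprod] at hden ⊢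
  rw [sub_mul_sub_eq_of_sum_of_prod hsum hprod, mul_div_mul_left _ _ (left_ne_zero_of_mul hden),
    cosh_div_sinh_sub_one_div_add_one hw]

/-- explicit rational-limit solution of the generalized Jacobi
inversion problem. -/
theorem rational_limit_jacobi_inversion (α U₁ U₃ ξ₁ ξ₂ : ℂ) (hα : α ≠ 0)
    (hden : (α + ξ₁) * (α + ξ₂) ≠ 0)
    (hw : Complex.sinh (U₃ / α ^ 3 + U₁ / α) ≠ 0)
    (hsum : ξ₁ + ξ₂ = U₁)
    (hprod : ξ₁ * ξ₂ = -α ^ 2 + α * U₁ *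
      Complex.cosh (U₃ / α ^ 3 + U₁ / α) / Complex.sinh (U₃ / α ^ 3 + U₁ / α)) :
    (α - ξ₁) * (α - ξ₂) / ((α + ξ₁) * (α + ξ₂))
      = Complex.exp (-2 * (U₃ / α ^ 3 + U₁ / α)) :=
  rational_limit_jacobi_inversion_general α U₁ U₃ ξ₁ ξ₂ hden hw hsum hprod
end
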